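/- arXiv:2306.08369 — 4 statements merged into one kernel-verified Lean document; each statement's English description precedes it below -/
import Mathlib

section
/- Let m, n be integers with m > 1 and n > 1, and let c = ((mn - 3m + 2) + sqrt((mn - 3m + 2)^2 + 16mn))/4. If mn ≤ m + 2c - 2, then m = 2 and c = n. -/
theorem case8_elimination (m n : ℤ) (hm : 1 < m) (hn : 1 < n)
    (c : ℝ)
    (hc : c = ((m * n - 3 * m + 2 : ℝ) +
      Real.sqrt (((m * n - 3 * m + 2 : ℝ))^2 + 16 * (m * n))) / 4)
    (hineq : (m * n : ℝ) ≤ (m : ℝ) + 2 * c - 2) :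
    m = 2 ∧ c = (n : ℝ) := by
  have hx : (2 : ℝ) ≤ (m : ℝ) := by exact_mod_cast hm
  have hy : (2 : ℝ) ≤ (n : ℝ) := by exact_mod_cast hn
  have hnn : (0 : ℝ) ≤ ((m * n - 3 * m + 2 : ℝ))^2 + 16 * (m * n) := by nlinarith
  have hS := Real.sq_sqrt hnn
  have hSnn := Real.sqrt_nonneg (((m * n - 3 * m + 2 : ℝ))^2 + 16 * (m * n))
  subst hc
  have hSge : ((m : ℝ) * n + m + 2) ≤
      Real.sqrt (((m * n - 3 * m + 2 : ℝ))^2 + 16 * (m * n)) := by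
    linarith
  have hpos : (0 : ℝ) ≤ (m : ℝ) * n + m + 2 := by nlinarith
  have h2 := pow_le_pow_left₀ hpos hSge 2
  rw [hS] at h2
  have hm2 : (m : ℝ) = 2 := by
    by_contra h
    have hgt : (2 : ℝ) < (m : ℝ) := lt_of_le_of_ne hx (Ne.symm h)
    nlinarith [h2, mul_pos (mul_pos (by linarith : (0:ℝ) < (m:ℝ))
      (by linarith : (0:ℝ) < (m:ℝ) - 2)) (by linarith : (0:ℝ) < (n:ℝ) - 1)]
  have hm2' : m = 2 := by exact_mod_cast hm2
  refine ⟨hm2', ?_⟩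
  rw [hm2]
  have harg : ((2 : ℝ) * n - 3 * 2 + 2)^2 + 16 * (2 * n) = (2 * (n:ℝ) + 4)^2 := by ring
  rw [harg, Real.sqrt_sq (by linarith)]
  ring
end

section
/- Let p be a prime and let s = -p^a for some natural number a ≥ 1. Let n > 1 be an integer such that n divides s², n/(-s) is an integer > 1, and ((n/(-s)) - 1) divides (n - 1). Then, with q = n/(-s), there is a natural number d such that n = q^{d+1} and -s = q^d. -/
/-- If `p ≥ 2` and `p^c - 1 ∣ p^b - 1` (over ℤ) with `c > 0`, then `c ∣ b`. -/
lemma pow_sub_one_dvd_pow_sub_one_imp (p : ℕ) (hp : 2 ≤ p) (c b : ℕ) (hc : 0 < c)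
    (h : ((p : ℤ) ^ c - 1) ∣ ((p : ℤ) ^ b - 1)) : c ∣ b := by
  obtain ⟨k, r, hdiv, hrc⟩ : ∃ k r, b = c * k + r ∧ r < c :=
    ⟨b / c, b % c, (Nat.div_add_mod b c).symm, Nat.mod_lt _ hc⟩
  have hple : (1 : ℤ) < (p : ℤ) := by exact_mod_cast hp
  have h1 : ((p : ℤ) ^ c - 1) ∣ ((p : ℤ) ^ (c * k) - 1) := by
    rw [pow_mul]
    simpa using sub_dvd_pow_sub_pow ((p : ℤ) ^ c) 1 k
  have h2 : ((p : ℤ) ^ c - 1) ∣ ((p : ℤ) ^ r - 1) := by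
    have heq : (p : ℤ) ^ r - 1 =
        ((p : ℤ) ^ b - 1) - (p : ℤ) ^ r * ((p : ℤ) ^ (c * k) - 1) := by
      rw [hdiv, pow_add]; ring
    rw [heq]
    exact dvd_sub h (Dvd.dvd.mul_left h1 _)
  have hr0 : r = 0 := by
    by_contra hr0
    have hlt : (p : ℤ) ^ r - 1 < (p : ℤ) ^ c - 1 := by
      have := pow_lt_pow_right₀ hple hrc
      linarith
    have hpos : 0 < (p : ℤ) ^ r - 1 := by
      have := one_lt_pow₀ hple hr0
      linarith
    have := Int.le_of_dvd hpos h2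
    linarith
  rw [hdiv, hr0, Nat.add_zero]
  exact Dvd.intro _ rfl

/-- Corollary 1: if `-s` is a prime power, `n ∣ s²`, `q = n/(-s) > 1` and
`(q - 1) ∣ (n - 1)`, then `n = q^(d+1)` and `-s = q^d` for some `d`. -/
theorem least_eigenvalue_prime_power (p : ℕ) (hp : p.Prime) (a : ℕ) (ha : 1 ≤ a)
    (s n : ℤ) (hs : s = -(p ^ a : ℕ)) (hn : 1 < n) (hdvd : n ∣ s ^ 2)
    (hqs : (-s) ∣ n) (hq : 1 < n / (-s)) (hm : (n / (-s) - 1) ∣ (n - 1)) :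
    ∃ d : ℕ, n = (n / (-s)) ^ (d + 1) ∧ -s = (n / (-s)) ^ d := by
  have hp2 : 2 ≤ p := hp.two_le
  have hple : (1 : ℤ) < (p : ℤ) := by exact_mod_cast hp2
  have hs' : -s = (p : ℤ) ^ a := by rw [hs]; push_cast; ring
  -- n ∣ p^(2a), so n = p^b
  have hdvd' : n ∣ ((p ^ (2 * a) : ℕ) : ℤ) := by
    have : s ^ 2 = ((p ^ (2 * a) : ℕ) : ℤ) := by
      rw [hs]; push_cast; rw [two_mul, pow_add]; ring
    rwa [this] at hdvd
  have hn0 : 0 ≤ n := le_of_lt (lt_trans one_pos hn)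
  have hnt : n = ((n.toNat : ℕ) : ℤ) := (Int.toNat_of_nonneg hn0).symm
  have hdvdN : n.toNat ∣ p ^ (2 * a) := by
    rw [← Int.natCast_dvd_natCast]; rwa [← hnt]
  obtain ⟨b, hble, hb⟩ := (Nat.dvd_prime_pow hp).mp hdvdN
  have hnb : n = (p : ℤ) ^ b := by rw [hnt, hb]; push_cast; ring
  -- a ≤ b
  have hab : a ≤ b := by
    have hd : p ^ a ∣ p ^ b := by
      rw [← Int.natCast_dvd_natCast]; push_cast
      rw [← hs', ← hnb]; exact hqs
    exact (Nat.pow_dvd_pow_iff_le_right hp.one_lt).mp hd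
  have hq_eq : n / (-s) = (p : ℤ) ^ (b - a) := by
    have hsplit : n = (p : ℤ) ^ a * (p : ℤ) ^ (b - a) := by
      rw [hnb, ← pow_add]; congr 1; omega
    rw [hs', hsplit]
    exact Int.mul_ediv_cancel_left _ (by positivity)
  have hcpos : 0 < b - a := by
    by_contra h0
    have hz : b - a = 0 := by omega
    rw [hq_eq, hz, pow_zero] at hq
    exact lt_irrefl _ hq
  -- (b - a) ∣ b
  have hcdvd : (b - a) ∣ b := by
    apply pow_sub_one_dvd_pow_sub_one_imp p hp2 _ _ hcpos
    rw [← hq_eq, ← hnb]; exact hm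
  obtain ⟨k, hk⟩ := hcdvd
  have hk1 : 1 ≤ k := by
    rcases Nat.eq_zero_or_pos k with h0 | h
    · subst h0; simp at hk; omega
    · exact h
  refine ⟨k - 1, ?_, ?_⟩
  · rw [hq_eq, hnb, ← pow_mul, Nat.sub_add_cancel hk1, ← hk]
  · rw [hq_eq, hs', ← pow_mul]
    congr 1
    have h2 : (b - a) * k = (b - a) * (k - 1) + (b - a) := by
      rw [← Nat.mul_succ]; congr 1; omega
    omega
end

section
/- In the setting of Construction 1, if x and y are distinct vertices of Δ lying in the same canonical class, then their number of common neighbours in Γ equals λ₁ + (-s) = (-s)(n+s). -/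
open SimpleGraph

/-- In Construction 1, two distinct vertices of `Δ` in the same canonical class
have exactly `λ₁ + (-s) = (-s)(n+s)` common neighbours in `Γ`. -/
theorem construction_same_class_common_neighbors
    (s : ℤ) (n : ℕ) (hs : s < 0) (hn : 1 < n) (hns : 0 < (n : ℤ) + s)
    (m : ℕ) (hm1 : 0 < m) (hm : (m : ℤ) * ((n : ℤ) + s) = (-s) * ((n : ℤ) - 1))
    (lam1 : ℤ) (hlam1 : lam1 = (-s) * ((n : ℤ) + s - 1))
    (Δ : SimpleGraph (Fin m × Fin n)) [DecidableRel Δ.Adj]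
    (hsame : ∀ u v : Fin m × Fin n, u ≠ v → u.1 = v.1 →
      (Δ.neighborFinset u ∩ Δ.neighborFinset v).card = lam1.toNat)
    (Block : Fin m → Finset (Fin m))
    (hblocksize : ∀ i, (Block i).card = (-s).toNat)
    (Γ : SimpleGraph ((Fin m × Fin n) ⊕ Fin m)) [DecidableRel Γ.Adj]
    (hΓ1 : ∀ u v : Fin m × Fin n, Γ.Adj (Sum.inl u) (Sum.inl v) ↔ Δ.Adj u v)
    (hΓ2 : ∀ (u : Fin m × Fin n) (y : Fin m),
      Γ.Adj (Sum.inl u) (Sum.inr y) ↔ y ∈ Block u.1)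
    (hΓ3 : ∀ y z : Fin m, ¬ Γ.Adj (Sum.inr y) (Sum.inr z))
    (x y : Fin m × Fin n) (hxy : x ≠ y) (hclass : x.1 = y.1) :
    ((Γ.neighborFinset (Sum.inl x) ∩ Γ.neighborFinset (Sum.inl y)).card : ℤ)
        = lam1 + (-s) ∧
    lam1 + (-s) = (-s) * ((n : ℤ) + s) := by
  have hset : Γ.neighborFinset (Sum.inl x) ∩ Γ.neighborFinset (Sum.inl y)
      = ((Δ.neighborFinset x ∩ Δ.neighborFinset y).map
          ⟨Sum.inl, Sum.inl_injective⟩) ∪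
        ((Block x.1).map ⟨Sum.inr, Sum.inr_injective⟩) := by
    ext z
    cases z with
    | inl u =>
      simp [mem_neighborFinset, hΓ1, adj_comm]
    | inr w =>
      simp only [Finset.mem_inter, mem_neighborFinset, Finset.mem_union,
        Finset.mem_map, Finset.mem_inter, Function.Embedding.coeFn_mk]
      constructor
      · rintro ⟨h1, _⟩; right; exact ⟨w, (hΓ2 x w).mp h1, rfl⟩
      · rintro (⟨u, _, h⟩ | ⟨v, hv, h⟩)
        · exact absurd h (by simp)
        · cases Sum.inr_injective h
          exact ⟨(hΓ2 x w).mpr hv, (hΓ2 y w).mpr (hclass ▸ hv)⟩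
  have hdisj : Disjoint ((Δ.neighborFinset x ∩ Δ.neighborFinset y).map
          ⟨Sum.inl, Sum.inl_injective⟩)
        ((Block x.1).map ⟨Sum.inr, Sum.inr_injective⟩) := by
    simp [Finset.disjoint_left]
  have hcard : (Γ.neighborFinset (Sum.inl x) ∩ Γ.neighborFinset (Sum.inl y)).card
      = lam1.toNat + (-s).toNat := by
    rw [hset, Finset.card_union_of_disjoint hdisj, Finset.card_map,
      Finset.card_map, hsame x y hxy hclass, hblocksize]
  have hlam1' : 0 ≤ lam1 := by
    rw [hlam1]; exact mul_nonneg (by omega) (by omega)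
  constructor
  · rw [hcard]; push_cast; omega
  · rw [hlam1]; ring
end

section
/- In the setting of Construction 1, if x and y are distinct points of the coclique P, then their number of common neighbours in Γ equals n·((-s)(n+s)/n) = (-s)(n+s). -/
open SimpleGraph

/-- In Construction 1, two distinct points of the coclique `P` have exactly
`n · ((-s)(n+s)/n) = (-s)(n+s)` common neighbours in `Γ`. -/
theorem construction_coclique_common_neighbors
    (s : ℤ) (n : ℕ) (hs : s < 0) (hn : 1 < n) (hns : 0 < (n : ℤ) + s)
    (m : ℕ) (hm1 : 0 < m) (hm : (m : ℤ) * ((n : ℤ) + s) = (-s) * ((n : ℤ) - 1))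
    (lam' : ℤ) (hlam' : lam' * (n : ℤ) = (-s) * ((n : ℤ) + s))
    (Δ : SimpleGraph (Fin m × Fin n)) [DecidableRel Δ.Adj]
    (Block : Fin m → Finset (Fin m))
    (hptint : ∀ y z : Fin m, y ≠ z →
      (Finset.univ.filter fun i => y ∈ Block i ∧ z ∈ Block i).card = lam'.toNat)
    (Γ : SimpleGraph ((Fin m × Fin n) ⊕ Fin m)) [DecidableRel Γ.Adj]
    (hΓ1 : ∀ u v : Fin m × Fin n, Γ.Adj (Sum.inl u) (Sum.inl v) ↔ Δ.Adj u v)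
    (hΓ2 : ∀ (u : Fin m × Fin n) (y : Fin m),
      Γ.Adj (Sum.inl u) (Sum.inr y) ↔ y ∈ Block u.1)
    (hΓ3 : ∀ y z : Fin m, ¬ Γ.Adj (Sum.inr y) (Sum.inr z))
    (y z : Fin m) (hyz : y ≠ z) :
    ((Γ.neighborFinset (Sum.inr y) ∩ Γ.neighborFinset (Sum.inr z)).card : ℤ)
        = (n : ℤ) * lam' ∧
    (n : ℤ) * lam' = (-s) * ((n : ℤ) + s) := by
  have hlamnn : 0 ≤ lam' := by
    nlinarith [mul_pos (neg_pos.mpr hs) hns, (by exact_mod_cast hn : (1:ℤ) < n)]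
  have hset : Γ.neighborFinset (Sum.inr y) ∩ Γ.neighborFinset (Sum.inr z)
      = ((Finset.univ.filter fun i => y ∈ Block i ∧ z ∈ Block i) ×ˢ
          (Finset.univ : Finset (Fin n))).map ⟨Sum.inl, Sum.inl_injective⟩ := by
    ext v
    cases v with
    | inl u =>
        simp only [Finset.mem_inter, mem_neighborFinset, Finset.mem_map,
          Finset.mem_product, Finset.mem_filter, Finset.mem_univ, true_and, and_true,
          Function.Embedding.coeFn_mk]
        constructor
        · rintro ⟨h1, h2⟩
          exact ⟨u, ⟨(hΓ2 u y).mp h1.symm, (hΓ2 u z).mp h2.symm⟩, rfl⟩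
        · rintro ⟨w, ⟨hw1, hw2⟩, heq⟩
          obtain rfl := Sum.inl_injective heq
          exact ⟨((hΓ2 w y).mpr hw1).symm, ((hΓ2 w z).mpr hw2).symm⟩
    | inr w =>
        simp [mem_neighborFinset, fun a => hΓ3 a w]
  have hcard : (Γ.neighborFinset (Sum.inr y) ∩ Γ.neighborFinset (Sum.inr z)).card
      = lam'.toNat * n := by
    rw [hset, Finset.card_map, Finset.card_product, hptint y z hyz,
      Finset.card_univ, Fintype.card_fin]
  constructor
  · rw [hcard]
    push_cast [Int.toNat_of_nonneg hlamnn]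
    ring
  · rw [mul_comm]; exact hlam'
end
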